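/- arXiv:2502.09968 — 2 statements merged into one kernel-verified Lean document; each statement's English description precedes it below -/
import Mathlib

section
/- Let n_1 ≥ n_2 ≥ ... ≥ n_k ≥ 2 with n_1 ≥ 3, n = n_1 + ... + n_k, and let Π = Π_{n_1} □ ... □ Π_{n_k}. Then Π is (n−k−3)-heavy, and consequently every maximal matching of Π has at least (n−k)/(3n−3k+1)·|V(Π)| edges. -/
/-- A matching of `G`: a set of edges of `G` that are pairwise vertex-disjoint. -/
def IsMatching {V : Type*} (G : SimpleGraph V) (M : Set (Sym2 V)) : Prop :=
  M ⊆ G.edgeSet ∧ ∀ e ∈ M, ∀ f ∈ M, e ≠ f → ∀ v, v ∈ e → v ∉ f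

/-- A maximal matching: a matching not properly contained in another matching. -/
def IsMaximalMatching {V : Type*} (G : SimpleGraph V) (M : Set (Sym2 V)) : Prop :=
  IsMatching G M ∧ ∀ M', IsMatching G M' → M ⊆ M' → M' = M

/-- A vertex is covered by a matching if it is incident to a matching edge. -/
def Covered {V : Type*} (M : Set (Sym2 V)) (v : V) : Prop :=
  ∃ e ∈ M, v ∈ e

/-- An induced 4-cycle of `G`, recorded as its set of four edges. -/
def IsInduced4Cycle {V : Type*} (G : SimpleGraph V) (C : Set (Sym2 V)) : Prop :=
  ∃ a b c d : V, a ≠ c ∧ b ≠ d ∧ G.Adj a b ∧ G.Adj b c ∧ G.Adj c d ∧ G.Adj d a ∧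
    ¬ G.Adj a c ∧ ¬ G.Adj b d ∧ C = {s(a,b), s(b,c), s(c,d), s(d,a)}

/-- `G` is `α`-heavy: every edge `e` lies in at least `α` induced 4-cycles such that
`e` is the only common edge of any two of these cycles. -/
def IsHeavy {V : Type*} (G : SimpleGraph V) (α : ℕ) : Prop :=
  ∀ e ∈ G.edgeSet, ∃ 𝒞 : Set (Set (Sym2 V)),
    α ≤ 𝒞.ncard ∧ (∀ C ∈ 𝒞, IsInduced4Cycle G C ∧ e ∈ C) ∧
    ∀ C ∈ 𝒞, ∀ C' ∈ 𝒞, C ≠ C' → C ∩ C' = {e}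

/-- The hypercube graph `Q_n` on binary strings of length `n`:
two strings are adjacent iff they differ in exactly one position. -/
def hypercube (n : ℕ) : SimpleGraph (Fin n → Bool) :=
  SimpleGraph.fromRel (fun x y => ∃! i, x i ≠ y i)

/-- The permutahedron graph `Π_n` on permutations of `[n]`:
`σ, τ` are adjacent iff `τ = σ * τᵢ` for an adjacent transposition `τᵢ = (i, i+1)`. -/
def permutahedron (n : ℕ) : SimpleGraph (Equiv.Perm (Fin n)) :=
  SimpleGraph.fromRel
    (fun σ τ => ∃ i j : Fin n, (i : ℕ) + 1 = (j : ℕ) ∧ τ = σ * Equiv.swap i j)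

/-- The neighborhood of the set `X` inside the set `S`. -/
def nbhdIn {V : Type*} (G : SimpleGraph V) (X S : Set V) : Set V :=
  {y ∈ S | ∃ x ∈ X, G.Adj x y}

/-- The Cartesian product `Π_{m 0} □ ⋯ □ Π_{m (k-1)}` of permutahedra, as a graph on
tuples of permutations: two tuples are adjacent iff they differ in exactly one coordinate,
where they are adjacent in the corresponding permutahedron. -/
def prodPerm (k : ℕ) (m : Fin k → ℕ) :
    SimpleGraph (∀ i : Fin k, Equiv.Perm (Fin (m i))) where
  Adj x y := ∃ i, (permutahedron (m i)).Adj (x i) (y i) ∧ ∀ j, j ≠ i → x j = y j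
  symm := by
    constructor
    rintro x y ⟨i, h, hj⟩
    exact ⟨i, h.symm, fun j hji => (hj j hji).symm⟩
  loopless := by
    constructor
    rintro x ⟨i, h, -⟩
    exact (permutahedron (m i)).irrefl h


/-!
`Π` is the Cayley graph of `∏ Sym(n_i)` whose generators are the adjacent transpositions
placed in a single coordinate; there are `n - k` of them, so `Π` is `(n - k)`-regular. If a
generator `t ≠ s` commutes with the generator `s` and `s t` is not a generator, then
`x, x s, x s t, x t` is an induced square through the edge `{x, x s}`, and two such squares share
only that edge. Every generator qualifies except `s` and the (at most two) transpositions
overlapping it in the same coordinate, so `Π` is `(n - k - 3)`-heavy.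

Let `M` be a maximal matching of a `d`-regular `α`-heavy graph with `d ≤ α + 3`, and count the
pairs `(v, u)` with `v ~ u` and `u` uncovered. Each uncovered `u` has `d` neighbours, all covered.
For a matching edge `xy`, each square `x y c w` of the family has `c` or `w` covered, and these
vertices are distinct neighbours of `y`, resp. `x`; so `x` and `y` together have at most
`2(d - 1) - α ≤ d + 1` uncovered neighbours. With `|V| = 2|M| + #uncovered` this gives
`d |V| ≤ (3d + 1) |M|`.
-/

open Finset Function

section InducedSquare

variable {V : Type*} {G : SimpleGraph V} {a b c d x y v : V}

def IsInducedSquare (G : SimpleGraph V) (a b c d : V) : Prop :=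
  a ≠ c ∧ b ≠ d ∧ G.Adj a b ∧ G.Adj b c ∧ G.Adj c d ∧ G.Adj d a ∧ ¬ G.Adj a c ∧ ¬ G.Adj b d

def squareEdges (a b c d : V) : Set (Sym2 V) := {s(a, b), s(b, c), s(c, d), s(d, a)}

lemma isInduced4Cycle_iff {C : Set (Sym2 V)} :
    IsInduced4Cycle G C ↔ ∃ a b c d, IsInducedSquare G a b c d ∧ C = squareEdges a b c d := by
  simp only [IsInduced4Cycle, IsInducedSquare, squareEdges, and_assoc]

lemma IsInducedSquare.rotate (h : IsInducedSquare G a b c d) : IsInducedSquare G b c d a :=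
  let ⟨hac, hbd, hab, hbc, hcd, hda, nac, nbd⟩ := h
  ⟨hbd, hac.symm, hbc, hcd, hda, hab, nbd, fun h => nac h.symm⟩

lemma IsInducedSquare.reverse (h : IsInducedSquare G a b c d) : IsInducedSquare G b a d c :=
  let ⟨hac, hbd, hab, hbc, hcd, hda, nac, nbd⟩ := h
  ⟨hbd, hac, hab.symm, hda.symm, hcd.symm, hbc.symm, nbd, nac⟩

lemma squareEdges_rotate : squareEdges b c d a = squareEdges a b c d := by
  ext; simp only [squareEdges, Set.mem_insert_iff, Set.mem_singleton_iff]; tauto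

lemma squareEdges_reverse : squareEdges b a d c = squareEdges a b c d := by
  ext; simp only [squareEdges, Set.mem_insert_iff, Set.mem_singleton_iff, Sym2.eq_swap]; tauto

lemma IsInducedSquare.edges_subset (h : IsInducedSquare G a b c d) :
    squareEdges a b c d ⊆ G.edgeSet := by
  obtain ⟨-, -, hab, hbc, hcd, hda, -, -⟩ := h
  rintro e (rfl | rfl | rfl | rfl | rfl) <;> assumption

lemma eq_or_eq_of_mem_squareEdges {e : Sym2 V} (he : e ∈ squareEdges a b c d) (hv : v ∈ e) :
    v = a ∨ v = b ∨ v = c ∨ v = d := by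
  rcases he with rfl | rfl | rfl | rfl | rfl <;> simp only [Sym2.mem_iff] at hv <;> tauto

lemma IsInducedSquare.exists_of_mem (h : IsInducedSquare G a b c d)
    (he : s(x, y) ∈ squareEdges a b c d) :
    ∃ c' d', IsInducedSquare G x y c' d' ∧ squareEdges x y c' d' = squareEdges a b c d := by
  have first : ∀ {a b c d}, IsInducedSquare G a b c d → s(x, y) = s(a, b) →
      ∃ c' d', IsInducedSquare G x y c' d' ∧ squareEdges x y c' d' = squareEdges a b c d := by
    intro a b c d h hxy
    rcases Sym2.eq_iff.mp hxy with ⟨rfl, rfl⟩ | ⟨rfl, rfl⟩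
    · exact ⟨c, d, h, rfl⟩
    · exact ⟨d, c, h.reverse, squareEdges_reverse⟩
  rcases he with he | he | he | he
  · exact first h he
  · simpa only [squareEdges_rotate] using first h.rotate he
  · simpa only [squareEdges_rotate] using first h.rotate.rotate he
  · simpa only [squareEdges_rotate] using first h.rotate.rotate.rotate he

end InducedSquare

section Matching

variable {V : Type*} {G : SimpleGraph V} {M : Set (Sym2 V)} {x y u v : V} {α d : ℕ}

lemma IsMaximalMatching.covered_of_adj (hM : IsMaximalMatching G M) (hu : ¬ Covered M u)
    (huv : G.Adj u v) : Covered M v := by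
  by_contra hv
  have hnew : ∀ f ∈ M, ∀ z ∈ s(u, v), z ∉ f := fun f hf z hz hzf => by
    rcases Sym2.mem_iff.mp hz with rfl | rfl
    exacts [hu ⟨f, hf, hzf⟩, hv ⟨f, hf, hzf⟩]
  have hmatch : IsMatching G (insert s(u, v) M) := by
    refine ⟨Set.insert_subset huv hM.1.1, ?_⟩
    rintro e (rfl | he) f (rfl | hf) hef z hze hzf
    · exact hef rfl
    · exact hnew f hf z hze hzf
    · exact hnew e he z hzf hze
    · exact hM.1.2 e he f hf hef z hze hzf
  refine hu ⟨s(u, v), ?_, Sym2.mem_mk_left u v⟩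
  rw [← hM.2 _ hmatch (Set.subset_insert _ _)]
  exact Set.mem_insert _ _

lemma IsHeavy.exists_opposite_paths [Finite V] (h : IsHeavy G α) (hxy : G.Adj x y) :
    ∃ c w : Fin α → V, Injective c ∧ Injective w ∧
      ∀ t, G.Adj y (c t) ∧ G.Adj (c t) (w t) ∧ G.Adj (w t) x ∧ x ≠ c t ∧ y ≠ w t := by
  obtain ⟨𝒞, hcard, hcyc, hinter⟩ := h s(x, y) hxy
  have hsq : ∀ C : 𝒞, ∃ r : V × V,
      IsInducedSquare G x y r.1 r.2 ∧ (C : Set (Sym2 V)) = squareEdges x y r.1 r.2 := by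
    rintro ⟨C, hC⟩
    obtain ⟨a, b, c, d, habcd, rfl⟩ := isInduced4Cycle_iff.mp (hcyc _ hC).1
    obtain ⟨c', d', h', he⟩ := habcd.exists_of_mem (hcyc _ hC).2
    exact ⟨(c', d'), h', he.symm⟩
  choose r hr using hsq
  have hunique : ∀ {C C' : 𝒞} {e : Sym2 V}, e ∈ (C : Set (Sym2 V)) → e ∈ (C' : Set (Sym2 V)) →
      e ≠ s(x, y) → C = C' := by
    intro C C' e he he' hne
    by_contra hCC
    have := hinter C C.2 C' C'.2 (Subtype.coe_injective.ne hCC)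
    exact hne (this ▸ ⟨he, he'⟩ : e ∈ ({s(x, y)} : Set (Sym2 V)))
  have hxny := hxy.ne
  have hc : Injective fun C => (r C).1 := fun C C' (hcc : (r C).1 = (r C').1) => by
    refine hunique (e := s(y, (r C).1)) ?_ ?_ ?_
    · rw [(hr C).2]; simp [squareEdges]
    · rw [(hr C').2, ← hcc]; simp [squareEdges]
    · rw [Ne, Sym2.eq_iff]
      exact fun h => h.elim (fun h => hxny h.1.symm) (fun h => (hr C).1.1 h.2.symm)
  have hw : Injective fun C => (r C).2 := fun C C' (hww : (r C).2 = (r C').2) => by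
    refine hunique (e := s((r C).2, x)) ?_ ?_ ?_
    · rw [(hr C).2]; simp [squareEdges]
    · rw [(hr C').2, ← hww]; simp [squareEdges]
    · rw [Ne, Sym2.eq_iff]
      exact fun h => h.elim (fun h => hxny h.2) (fun h => (hr C).1.2.1 h.1.symm)
  let e : Fin α ↪ 𝒞 := (Fin.castLEEmb (by rwa [Nat.card_coe_set_eq])).trans
    (Finite.equivFin 𝒞).symm.toEmbedding
  refine ⟨fun t => (r (e t)).1, fun t => (r (e t)).2, hc.comp e.injective, hw.comp e.injective,
    fun t => ?_⟩
  obtain ⟨hxc, hyw, -, hyc, hcw, hwx, -, -⟩ := (hr (e t)).1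
  exact ⟨hyc, hcw, hwx, hxc, hyw⟩

variable [Fintype V] [DecidableEq V] [DecidablePred (Covered M)]

lemma IsMatching.sum_covered {β : Type*} [AddCommMonoid β] (hM : IsMatching G M) (f : V → β) :
    ∑ v with Covered M v, f v = ∑ e ∈ (Set.toFinite M).toFinset, ∑ v ∈ e.toFinset, f v := by
  rw [← sum_biUnion]
  · congr 1
    ext v
    simp only [mem_filter, mem_univ, true_and, mem_biUnion, Sym2.mem_toFinset,
      Set.Finite.mem_toFinset]
    rfl
  · intro e he e' he' hne
    refine disjoint_left.2 fun v hv hv' => ?_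
    rw [Set.Finite.coe_toFinset] at he he'
    exact hM.2 e he e' he' hne v (Sym2.mem_toFinset.1 hv) (Sym2.mem_toFinset.1 hv')

lemma IsMatching.card_covered (hM : IsMatching G M) : #{v | Covered M v} = 2 * M.ncard := by
  rw [card_eq_sum_ones, hM.sum_covered, Set.ncard_eq_toFinset_card M, mul_comm, ← smul_eq_mul,
    ← sum_const]
  refine sum_congr rfl fun e he => ?_
  rw [← card_eq_sum_ones, Sym2.card_toFinset_of_not_isDiag]
  exact G.not_isDiag_of_mem_edgeSet (hM.1 ((Set.toFinite M).mem_toFinset.1 he))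

variable [DecidableRel G.Adj]

lemma card_uncovered_adj_add_card_add_one_le {ι : Type*} {T : Finset ι} {w : ι → V}
    (hxy : G.Adj x y) (hy : Covered M y) (hw : Set.InjOn w T) (hwx : ∀ t ∈ T, G.Adj x (w t))
    (hwy : ∀ t ∈ T, w t ≠ y) (hcov : ∀ t ∈ T, Covered M (w t)) :
    #{u | ¬ Covered M u ∧ G.Adj x u} + #T + 1 ≤ G.degree x := by
  set A : Finset V := {u | ¬ Covered M u ∧ G.Adj x u}
  have hdisj : Disjoint A (T.image w) := by
    refine disjoint_left.2 fun u hu hu' => ?_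
    obtain ⟨t, ht, rfl⟩ := mem_image.1 hu'
    exact (mem_filter.1 hu).2.1 (hcov t ht)
  have hy' : y ∉ A ∪ T.image w := by
    simp only [A, mem_union, mem_filter, mem_image, not_or, not_exists, not_and]
    exact ⟨fun _ h => (h hy).elim, fun t ht => hwy t ht⟩
  have hsub : insert y (A ∪ T.image w) ⊆ G.neighborFinset x := by
    intro u hu
    rw [SimpleGraph.mem_neighborFinset]
    rcases mem_insert.1 hu with rfl | hu
    · exact hxy
    rcases mem_union.1 hu with hu | hu
    · exact (mem_filter.1 hu).2.2
    · obtain ⟨t, ht, rfl⟩ := mem_image.1 hu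
      exact hwx t ht
  calc #A + #T + 1 = #(insert y (A ∪ T.image w)) := by
        rw [card_insert_of_notMem hy', card_union_of_disjoint hdisj, card_image_of_injOn hw]
    _ ≤ G.degree x := (card_le_card hsub).trans_eq (G.card_neighborFinset_eq_degree x)

lemma IsMaximalMatching.card_uncovered_adj_add_le (hM : IsMaximalMatching G M)
    (hreg : G.IsRegularOfDegree d) (hheavy : IsHeavy G α) (hα : d ≤ α + 3) (hxy : G.Adj x y)
    (hx : Covered M x) (hy : Covered M y) :
    #{u | ¬ Covered M u ∧ G.Adj x u} + #{u | ¬ Covered M u ∧ G.Adj y u} ≤ d + 1 := by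
  obtain ⟨c, w, hc, hw, hcw⟩ := hheavy.exists_opposite_paths hxy
  have hcover : ∀ t, Covered M (c t) ∨ Covered M (w t) := fun t =>
    or_iff_not_imp_left.2 fun h => hM.covered_of_adj h (hcw t).2.1
  have hα' : α ≤ #{t | Covered M (c t)} + #{t | Covered M (w t)} :=
    calc α = #({t | Covered M (c t) ∨ Covered M (w t)} : Finset (Fin α)) := by
          rw [filter_true_of_mem fun t _ => hcover t, card_univ, Fintype.card_fin]
      _ ≤ _ := by rw [filter_or]; exact card_union_le _ _
  have hxside := card_uncovered_adj_add_card_add_one_le (T := {t | Covered M (w t)})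
    hxy hy hw.injOn (fun t _ => (hcw t).2.2.1.symm) (fun t _ => (hcw t).2.2.2.2.symm)
    (fun t ht => (mem_filter.1 ht).2)
  have hyside := card_uncovered_adj_add_card_add_one_le (T := {t | Covered M (c t)})
    hxy.symm hx hc.injOn (fun t _ => (hcw t).1) (fun t _ => (hcw t).2.2.2.1.symm)
    (fun t ht => (mem_filter.1 ht).2)
  rw [hreg.degree_eq] at hxside hyside
  omega

theorem IsMaximalMatching.mul_card_le_mul_ncard (hM : IsMaximalMatching G M)
    (hreg : G.IsRegularOfDegree d) (hheavy : IsHeavy G α) (hα : d ≤ α + 3) :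
    d * Fintype.card V ≤ (3 * d + 1) * M.ncard := by
  set U : Finset V := {u | ¬ Covered M u}
  have hcard : Fintype.card V = 2 * M.ncard + #U := by
    rw [← hM.1.card_covered, card_filter_add_card_filter_not, card_univ]
  have hdouble : #U * d = ∑ v with Covered M v, #{u ∈ U | G.Adj v u} := by
    rw [sum_filter_of_ne]
    · calc #U * d = ∑ u ∈ U, #(bipartiteBelow G.Adj univ u) := by
            rw [← smul_eq_mul, ← sum_const]
            refine sum_congr rfl fun u _ => ?_
            simp only [bipartiteBelow, ← hreg.degree_eq u, ← G.card_neighborFinset_eq_degree,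
              G.neighborFinset_eq_filter, G.adj_comm]
        _ = ∑ v, #(bipartiteAbove G.Adj U v) :=
            (sum_card_bipartiteAbove_eq_sum_card_bipartiteBelow _).symm
    · intro v _ hv
      obtain ⟨u, hu⟩ := card_ne_zero.1 hv
      simp only [U, mem_filter] at hu
      exact hM.covered_of_adj hu.1.2 hu.2.symm
  have hedges : ∑ v with Covered M v, #{u ∈ U | G.Adj v u} ≤ M.ncard * (d + 1) := by
    rw [hM.1.sum_covered, Set.ncard_eq_toFinset_card M, ← smul_eq_mul, ← sum_const]
    refine sum_le_sum fun e he => ?_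
    have he' := (Set.toFinite M).mem_toFinset.1 he
    induction e using Sym2.ind with | _ x y => ?_
    have hxy : G.Adj x y := hM.1.1 he'
    rw [Sym2.toFinset_mk_eq, sum_pair hxy.ne]
    simpa only [U, filter_filter] using hM.card_uncovered_adj_add_le hreg hheavy hα hxy
      ⟨_, he', Sym2.mem_mk_left x y⟩ ⟨_, he', Sym2.mem_mk_right x y⟩
  calc d * Fintype.card V = 2 * d * M.ncard + #U * d := by rw [hcard]; ring
    _ ≤ 2 * d * M.ncard + M.ncard * (d + 1) := by omega
    _ = (3 * d + 1) * M.ncard := by ring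

end Matching

section Cayley

open scoped Pointwise

variable {H : Type*} [Group H] {G : SimpleGraph H} {S : Set H} {s t t' x : H} {α : ℕ}

/-- `t` closes an induced square `x, x s, x s t, x t` with the generator `s`. -/
def IsSquarePartner (S : Set H) (s t : H) : Prop :=
  t ∈ S ∧ t ≠ s ∧ Commute s t ∧ s * t ∉ S

lemma IsSquarePartner.mul_ne_one (hss : s * s = 1) (ht : IsSquarePartner S s t) : s * t ≠ 1 :=
  fun h => ht.2.1 (by rw [eq_inv_of_mul_eq_one_right h, inv_eq_of_mul_eq_one_right hss])

variable (hG : ∀ x y, G.Adj x y ↔ x⁻¹ * y ∈ S)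
include hG

lemma one_notMem_of_adj_iff : (1 : H) ∉ S := fun h =>
  G.loopless.irrefl 1 ((hG 1 1).2 (by simpa using h))

lemma isInducedSquare_of_isSquarePartner (hs : s ∈ S) (hss : s * s = 1)
    (ht : IsSquarePartner S s t) : IsInducedSquare G x (x * s) (x * s * t) (x * t) := by
  have hst1 := ht.mul_ne_one hss
  obtain ⟨htS, hts, hst, hstS⟩ := ht
  have hs' : s⁻¹ = s := inv_eq_of_mul_eq_one_right hss
  have hxst : x * s * t = x * t * s := by rw [mul_assoc, hst.eq, ← mul_assoc]
  refine ⟨?_, ?_, ?_, ?_, ?_, ?_, ?_, ?_⟩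
  · simpa [mul_assoc, eq_comm] using hst1
  · simpa using hts.symm
  · rw [hG]; simpa using hs
  · rw [hG]; simpa [mul_assoc] using htS
  · rw [hxst, G.adj_comm, hG]; simpa [mul_assoc] using hs
  · rw [G.adj_comm, hG]; simpa using htS
  · rw [hG]; simpa [mul_assoc] using hstS
  · rw [hG]; simpa [mul_assoc, hs'] using hstS

lemma squareEdges_inter_squareEdges (hs : s ∈ S) (hss : s * s = 1)
    (ht : IsSquarePartner S s t) (ht' : IsSquarePartner S s t') (htt' : t ≠ t') :
    squareEdges x (x * s) (x * s * t) (x * t) ∩ squareEdges x (x * s) (x * s * t') (x * t') =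
      {s(x, x * s)} := by
  have hvert : ∀ {e}, e ∈ squareEdges x (x * s) (x * s * t) (x * t) →
      e ∈ squareEdges x (x * s) (x * s * t') (x * t') → ∀ v ∈ e, v = x ∨ v = x * s := by
    have hst1 := ht.mul_ne_one hss
    have ht1 : t ≠ 1 := fun h => one_notMem_of_adj_iff hG (h ▸ ht.1)
    have hstt' : s * t ≠ t' := fun h => ht.2.2.2 (h ▸ ht'.1)
    have htst' : t ≠ s * t' := fun h => ht'.2.2.2 (h ▸ ht.1)
    have hts := ht.2.1
    intro e he he' v hv
    -- the vertices are `x g` for `g ∈ {1, s, s t, t}`, resp. `{1, s, s t', t'}`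
    rcases eq_or_eq_of_mem_squareEdges he hv with rfl | rfl | rfl | rfl
    · exact Or.inl rfl
    · exact Or.inr rfl
    all_goals
      rcases eq_or_eq_of_mem_squareEdges he' hv with h | h | h | h <;>
        simp only [mul_assoc, mul_right_inj, mul_eq_left] at h <;>
        exact absurd h ‹_›
  ext e
  refine ⟨fun ⟨he, he'⟩ => ?_, fun he => ?_⟩
  · have hedge := (isInducedSquare_of_isSquarePartner hG hs hss ht).edges_subset he
    induction e using Sym2.ind with | _ u v => ?_
    have huv := G.ne_of_adj hedge
    rcases hvert he he' u (Sym2.mem_mk_left u v) with rfl | rfl <;>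
      rcases hvert he he' v (Sym2.mem_mk_right _ v) with rfl | rfl
    exacts [(huv rfl).elim, rfl, Sym2.eq_swap, (huv rfl).elim]
  · rw [Set.mem_singleton_iff.1 he]
    exact ⟨Set.mem_insert _ _, Set.mem_insert _ _⟩

theorem isHeavy_of_adj_iff (hS : ∀ s ∈ S, s * s = 1)
    (hα : ∀ s ∈ S, α ≤ {t | IsSquarePartner S s t}.ncard) : IsHeavy G α := by
  intro e he
  induction e using Sym2.ind with | _ x y => ?_
  obtain ⟨s, hs, rfl⟩ : ∃ s ∈ S, y = x * s := ⟨_, (hG x y).1 he, by simp⟩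
  have hinter {t t'} (ht : IsSquarePartner S s t) (ht' : IsSquarePartner S s t')
      (htt' : t ≠ t') := squareEdges_inter_squareEdges (x := x) hG hs (hS s hs) ht ht' htt'
  refine ⟨(fun t => squareEdges x (x * s) (x * s * t) (x * t)) '' {t | IsSquarePartner S s t},
    ?_, ?_, ?_⟩
  · rw [Set.InjOn.ncard_image]
    · exact hα s hs
    intro t ht t' ht' (heq : squareEdges _ _ _ _ = squareEdges _ _ _ _)
    by_contra htt'
    have hmem : s(x * t, x) ∈ ({s(x, x * s)} : Set (Sym2 H)) := by
      rw [← hinter ht ht' htt', ← heq, Set.inter_self]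
      simp [squareEdges]
    rcases Sym2.eq_iff.1 (Set.mem_singleton_iff.1 hmem) with ⟨h, -⟩ | ⟨h, -⟩
    · exact one_notMem_of_adj_iff hG (mul_eq_left.1 h ▸ ht.1)
    · exact ht.2.1 (mul_left_cancel h)
  · rintro _ ⟨t, ht, rfl⟩
    exact ⟨isInduced4Cycle_iff.2 ⟨_, _, _, _,
      isInducedSquare_of_isSquarePartner hG hs (hS s hs) ht, rfl⟩, Set.mem_insert _ _⟩
  · rintro _ ⟨t, ht, rfl⟩ _ ⟨t', ht', rfl⟩ hne
    exact hinter ht ht' fun h => hne (h ▸ rfl)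

lemma degree_eq_ncard_of_adj_iff [Fintype H] [DecidableRel G.Adj] (x : H) :
    G.degree x = S.ncard := by
  have : G.neighborSet x = x • S := by
    ext y
    rw [Set.mem_smul_set_iff_inv_smul_mem, SimpleGraph.mem_neighborSet, hG, smul_eq_mul]
  rw [← G.card_neighborSet_eq_degree, ← Nat.card_eq_fintype_card, Nat.card_coe_set_eq, this,
    Set.ncard_smul_set]

end Cayley

section Pi

variable {ι : Type*} [DecidableEq ι] {H : ι → Type*} [∀ i, Group (H i)] {S : ∀ i, Set (H i)}
  {i l : ι} {σ τ : H i}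

/-- Its Cayley graph is the Cartesian product of the Cayley graphs of the `S i`. -/
def mulSingleUnion (S : ∀ i, Set (H i)) : Set (∀ i, H i) :=
  ⋃ i, Pi.mulSingle i '' S i

lemma inv_mul_mem_mulSingleUnion_iff {x y : ∀ i, H i} :
    x⁻¹ * y ∈ mulSingleUnion S ↔ ∃ i, (x i)⁻¹ * y i ∈ S i ∧ ∀ j, j ≠ i → x j = y j := by
  simp only [mulSingleUnion, Set.mem_iUnion, Set.mem_image]
  constructor
  · rintro ⟨i, σ, hσ, h⟩
    have hσi : σ = (x i)⁻¹ * y i := by simpa using congrFun h i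
    refine ⟨i, hσi ▸ hσ, fun j hj => inv_mul_eq_one.1 ?_⟩
    simpa [hj] using (congrFun h j).symm
  · rintro ⟨i, hi, hj⟩
    refine ⟨i, _, hi, funext fun j => ?_⟩
    rcases eq_or_ne j i with rfl | hji
    · simp
    · simp [hji, hj j hji]

lemma mulSingle_mem_mulSingleUnion (hσ : σ ∈ S i) : Pi.mulSingle i σ ∈ mulSingleUnion S :=
  Set.mem_iUnion.2 ⟨i, σ, hσ, rfl⟩

lemma ncard_mulSingleUnion [Finite ι] [∀ i, Finite (H i)] (h1 : ∀ i, (1 : H i) ∉ S i) :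
    (mulSingleUnion S).ncard = ∑ᶠ i, (S i).ncard := by
  rw [mulSingleUnion, Set.ncard_iUnion_of_finite (fun i => Set.toFinite _)]
  · exact finsum_congr fun i => (Pi.mulSingle_injective i).injOn.ncard_image
  · intro i j hij
    refine Set.disjoint_left.2 ?_
    rintro _ ⟨σ, hσ, rfl⟩ ⟨τ, -, h⟩
    have hσ1 : 1 = σ := by simpa [hij.symm] using congrFun h i
    exact h1 i (hσ1 ▸ hσ)

variable (h1 : ∀ i, (1 : H i) ∉ S i)
include h1

lemma isSquarePartner_mulSingle_of_ne (hσ : σ ∈ S i) {τ : H l} (hτ : τ ∈ S l) (hil : i ≠ l) :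
    IsSquarePartner (mulSingleUnion S) (Pi.mulSingle i σ) (Pi.mulSingle l τ) := by
  refine ⟨mulSingle_mem_mulSingleUnion hτ, fun h => ?_, Pi.mulSingle_commute hil σ τ, ?_⟩
  · have hτ1 : τ = 1 := by simpa [hil.symm] using congrFun h l
    exact h1 l (hτ1 ▸ hτ)
  simp only [mulSingleUnion, Set.mem_iUnion, Set.mem_image, not_exists, not_and]
  intro j ρ hρ h
  rcases eq_or_ne j i with rfl | hji
  · have hτ1 : 1 = τ := by simpa [hil.symm] using congrFun h l
    exact h1 l (hτ1 ▸ hτ)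
  · have hσ1 : σ = 1 := by simpa [hji.symm, hil] using (congrFun h i).symm
    exact h1 i (hσ1 ▸ hσ)

lemma IsSquarePartner.mulSingle (hτ : IsSquarePartner (S i) σ τ) :
    IsSquarePartner (mulSingleUnion S) (Pi.mulSingle i σ) (Pi.mulSingle i τ) := by
  obtain ⟨hτS, hτσ, hcomm, hστ⟩ := hτ
  refine ⟨mulSingle_mem_mulSingleUnion hτS, (Pi.mulSingle_injective i).ne hτσ,
    hcomm.map (MonoidHom.mulSingle H i), ?_⟩
  simp only [mulSingleUnion, Set.mem_iUnion, Set.mem_image, not_exists, not_and,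
    ← Pi.mulSingle_mul]
  intro j ρ hρ h
  rcases eq_or_ne j i with rfl | hji
  · exact hστ (Pi.mulSingle_injective j h ▸ hρ)
  · have hρ1 : ρ = 1 := by simpa [hji] using congrFun h j
    exact h1 j (hρ1 ▸ hρ)

lemma ncard_sub_le_ncard_isSquarePartner_mulSingle [Finite ι] [∀ i, Finite (H i)]
    (hσ : σ ∈ S i) :
    (mulSingleUnion S).ncard - (S i \ {τ | IsSquarePartner (S i) σ τ}).ncard ≤
      {t | IsSquarePartner (mulSingleUnion S) (Pi.mulSingle i σ) t}.ncard := by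
  set B := S i \ {τ | IsSquarePartner (S i) σ τ}
  have hsub : mulSingleUnion S \ Pi.mulSingle i '' B ⊆
      {t | IsSquarePartner (mulSingleUnion S) (Pi.mulSingle i σ) t} := by
    rintro _ ⟨hU, hB⟩
    obtain ⟨l, τ, hτ, rfl⟩ := Set.mem_iUnion.1 hU
    rcases eq_or_ne i l with rfl | hil
    · by_contra hτσ
      exact hB ⟨τ, ⟨hτ, fun h => hτσ (h.mulSingle h1)⟩, rfl⟩
    · exact isSquarePartner_mulSingle_of_ne h1 hσ hτ hil
  calc (mulSingleUnion S).ncard - B.ncard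
      ≤ (mulSingleUnion S).ncard - (Pi.mulSingle i '' B).ncard :=
        Nat.sub_le_sub_left (Set.ncard_image_le (Set.toFinite B)) _
    _ ≤ (mulSingleUnion S \ Pi.mulSingle i '' B).ncard := Set.le_ncard_sdiff _ _
    _ ≤ _ := Set.ncard_le_ncard hsub

end Pi

section Permutahedron

open Equiv

variable {n p q : ℕ}

/-- The transposition `(p, p+1)`, or the identity when `p + 1 ≥ n`. -/
def adjSwap (n p : ℕ) : Perm (Fin n) :=
  if h : p + 1 < n then swap ⟨p, Nat.lt_of_succ_lt h⟩ ⟨p + 1, h⟩ else 1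

def adjSwaps (n : ℕ) : Set (Perm (Fin n)) := adjSwap n '' Set.Iio (n - 1)

lemma adjSwap_of_lt (hp : p + 1 < n) :
    adjSwap n p = swap ⟨p, Nat.lt_of_succ_lt hp⟩ ⟨p + 1, hp⟩ :=
  dif_pos hp

lemma adjSwap_mul_self : adjSwap n p * adjSwap n p = 1 := by
  unfold adjSwap
  split_ifs <;> simp

lemma adjSwap_inv : (adjSwap n p)⁻¹ = adjSwap n p :=
  inv_eq_of_mul_eq_one_right adjSwap_mul_self

lemma adjSwap_ne_one (hp : p + 1 < n) : adjSwap n p ≠ 1 := by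
  simp [adjSwap_of_lt hp, swap_eq_one_iff]

lemma permutahedron_adj_iff {σ τ : Perm (Fin n)} :
    (permutahedron n).Adj σ τ ↔ σ⁻¹ * τ ∈ adjSwaps n := by
  have hswap : ∀ {i j : Fin n}, (i : ℕ) + 1 = j → swap i j = adjSwap n i := by
    rintro ⟨i, hi⟩ ⟨j, hj⟩ (rfl : i + 1 = j)
    rw [adjSwap_of_lt hj]
  simp only [permutahedron, SimpleGraph.fromRel_adj, adjSwaps, Set.mem_image, Set.mem_Iio]
  constructor
  · rintro ⟨hne, ⟨i, j, hij, rfl⟩ | ⟨i, j, hij, rfl⟩⟩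
    · exact ⟨i, by omega, by rw [hswap hij, inv_mul_cancel_left]⟩
    · exact ⟨i, by omega, by rw [hswap hij, mul_inv_rev, adjSwap_inv, inv_mul_cancel_right]⟩
  · rintro ⟨p, hp, h⟩
    have hp' : p + 1 < n := by omega
    have hτ : τ = σ * adjSwap n p := by rw [h, mul_inv_cancel_left]
    refine ⟨fun hστ => adjSwap_ne_one hp' ?_,
      Or.inl ⟨⟨p, Nat.lt_of_succ_lt hp'⟩, ⟨p + 1, hp'⟩, rfl, ?_⟩⟩
    · rw [h, hστ, inv_mul_cancel]
    · rw [hτ, adjSwap_of_lt hp']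

lemma one_notMem_adjSwaps : (1 : Perm (Fin n)) ∉ adjSwaps n :=
  one_notMem_of_adj_iff fun _ _ => permutahedron_adj_iff

lemma adjSwap_injOn : Set.InjOn (adjSwap n) (Set.Iio (n - 1)) := by
  intro p (hp : p < n - 1) q (hq : q < n - 1) h
  have hp' : p + 1 < n := by omega
  have hq' : q + 1 < n := by omega
  have hval := congrArg (fun σ : Perm (Fin n) => (σ ⟨p, Nat.lt_of_succ_lt hp'⟩ : ℕ)) h
  simp only [adjSwap_of_lt hp', adjSwap_of_lt hq', swap_apply_left, swap_apply_def,
    Fin.ext_iff] at hval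
  split_ifs at hval with h
  · exact h
  all_goals simp only at hval; omega

lemma ncard_adjSwaps : (adjSwaps n).ncard = n - 1 := by
  rw [adjSwaps, adjSwap_injOn.ncard_image, ← Finset.coe_Iio, Set.ncard_coe_finset, Nat.card_Iio]

lemma card_support_adjSwap (hp : p + 1 < n) : (adjSwap n p).support.card = 2 := by
  rw [adjSwap_of_lt hp]
  exact Perm.card_support_swap (by simp [Fin.ext_iff])

lemma isSquarePartner_adjSwap (hp : p + 1 < n) (hq : q + 1 < n) (hpq : p + 2 ≤ q ∨ q + 2 ≤ p) :
    IsSquarePartner (adjSwaps n) (adjSwap n p) (adjSwap n q) := by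
  have hdisj : (adjSwap n p).Disjoint (adjSwap n q) := by
    rw [adjSwap_of_lt hp, adjSwap_of_lt hq]
    exact Perm.disjoint_swap_swap (by simp [Fin.ext_iff]; omega)
  refine ⟨⟨q, show q < n - 1 by omega, rfl⟩, fun h => ?_, hdisj.commute, ?_⟩
  · have := adjSwap_injOn (show q < n - 1 by omega) (show p < n - 1 by omega) h
    omega
  · rintro ⟨r, hr : r < n - 1, h⟩
    have hr' : r + 1 < n := by omega
    have hcard := congrArg (fun σ : Perm (Fin n) => σ.support.card) h
    simp only [hdisj.card_support_mul, card_support_adjSwap hp, card_support_adjSwap hq,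
      card_support_adjSwap hr'] at hcard
    omega

/-- Only `(p-1, p)`, `(p, p+1)` and `(p+1, p+2)` fail to close an induced square with
`(p, p+1)`. -/
lemma ncard_adjSwaps_diff_isSquarePartner_le (hp : p + 1 < n) :
    (adjSwaps n \ {τ | IsSquarePartner (adjSwaps n) (adjSwap n p) τ}).ncard ≤ 3 := by
  have hsub : adjSwaps n \ {τ | IsSquarePartner (adjSwaps n) (adjSwap n p) τ} ⊆
      adjSwap n '' ↑({p - 1, p, p + 1} : Finset ℕ) := by
    rintro _ ⟨⟨q, hq : q < n - 1, rfl⟩, hnot⟩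
    refine ⟨q, ?_, rfl⟩
    by_contra hfar
    simp only [Finset.coe_insert, Finset.coe_singleton, Set.mem_insert_iff,
      Set.mem_singleton_iff] at hfar
    exact hnot (isSquarePartner_adjSwap hp (by omega) (by omega))
  calc _ ≤ (adjSwap n '' ↑({p - 1, p, p + 1} : Finset ℕ)).ncard := Set.ncard_le_ncard hsub
    _ ≤ (↑({p - 1, p, p + 1} : Finset ℕ) : Set ℕ).ncard :=
      Set.ncard_image_le (Finset.finite_toSet _)
    _ ≤ 3 := by rw [Set.ncard_coe_finset]; exact Finset.card_le_three

end Permutahedron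

section ProductOfPermutahedra

variable {k : ℕ} {m : Fin k → ℕ}

lemma prodPerm_adj_iff {x y : ∀ i : Fin k, Equiv.Perm (Fin (m i))} :
    (prodPerm k m).Adj x y ↔ x⁻¹ * y ∈ mulSingleUnion fun i => adjSwaps (m i) := by
  simp only [inv_mul_mem_mulSingleUnion_iff, ← permutahedron_adj_iff]
  rfl

lemma ncard_mulSingleUnion_adjSwaps :
    (mulSingleUnion fun i => adjSwaps (m i)).ncard = ∑ i, (m i - 1) := by
  rw [ncard_mulSingleUnion fun i => one_notMem_adjSwaps, finsum_eq_sum_of_fintype]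
  simp only [ncard_adjSwaps]

lemma prodPerm_isRegularOfDegree [DecidableRel (prodPerm k m).Adj] :
    (prodPerm k m).IsRegularOfDegree (∑ i, (m i - 1)) := fun x =>
  (degree_eq_ncard_of_adj_iff (fun _ _ => prodPerm_adj_iff) x).trans
    ncard_mulSingleUnion_adjSwaps

lemma prodPerm_isHeavy : IsHeavy (prodPerm k m) (∑ i, (m i - 1) - 3) := by
  refine isHeavy_of_adj_iff (fun _ _ => prodPerm_adj_iff) ?_ ?_
  · rintro _ hs
    obtain ⟨i, _, ⟨p, -, rfl⟩, rfl⟩ := Set.mem_iUnion.1 hs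
    rw [← Pi.mulSingle_mul, adjSwap_mul_self, Pi.mulSingle_one]
  · rintro _ hs
    obtain ⟨i, _, ⟨p, hp : p < m i - 1, rfl⟩, rfl⟩ := Set.mem_iUnion.1 hs
    have hsub := ncard_sub_le_ncard_isSquarePartner_mulSingle (fun i => one_notMem_adjSwaps)
      (⟨p, hp, rfl⟩ : adjSwap (m i) p ∈ adjSwaps (m i))
    have hbad := ncard_adjSwaps_diff_isSquarePartner_le (n := m i) (p := p) (by omega)
    rw [ncard_mulSingleUnion_adjSwaps] at hsub
    omega

end ProductOfPermutahedra

theorem stmt17_general (k : ℕ) (m : Fin k → ℕ)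
    (h2 : ∀ i, 2 ≤ m i) :
    IsHeavy (prodPerm k m) (∑ i, m i - k - 3) ∧
    ∀ M : Set (Sym2 (∀ i : Fin k, Equiv.Perm (Fin (m i)))),
      IsMaximalMatching (prodPerm k m) M →
      ((∑ i, m i : ℕ) - (k : ℝ)) / (3 * (∑ i, m i : ℕ) - 3 * (k : ℝ) + 1) *
          (Fintype.card (∀ i : Fin k, Equiv.Perm (Fin (m i))) : ℝ) ≤ (M.ncard : ℝ) := by
  classical
  have hm : ∀ i, 1 ≤ m i := fun i => one_le_two.trans (h2 i)
  have hsum : ∑ i, (m i - 1) = ∑ i, m i - k := by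
    rw [Finset.sum_tsub_distrib _ fun i _ => hm i]
    simp
  refine ⟨hsum ▸ prodPerm_isHeavy, fun M hM => ?_⟩
  have hcount := hM.mul_card_le_mul_ncard prodPerm_isRegularOfDegree prodPerm_isHeavy le_tsub_add
  have hd : ((∑ i, (m i - 1) : ℕ) : ℝ) = (∑ i, m i : ℕ) - k := by
    push_cast [Nat.cast_sub (hm _)]
    simp [Finset.sum_sub_distrib]
  have hden : 3 * ((∑ i, m i : ℕ) : ℝ) - 3 * k + 1 = 3 * ((∑ i, (m i - 1) : ℕ) : ℝ) + 1 := by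
    rw [hd]; ring
  rw [← hd, hden, div_mul_eq_mul_div, div_le_iff₀ (by positivity)]
  exact_mod_cast hcount.trans_eq (mul_comm _ _)

/-- for `n_1 ≥ … ≥ n_k ≥ 2` with `n_1 ≥ 3` and `n = n_1 + … + n_k`, the
product `Π = Π_{n_1} □ ⋯ □ Π_{n_k}` is `(n−k−3)`-heavy, and consequently every maximal
matching of `Π` has at least `(n−k)/(3n−3k+1)·|V(Π)|` edges. -/
theorem stmt17 (k : ℕ) (hk : 0 < k) (m : Fin k → ℕ) (hmono : Antitone m)
    (h2 : ∀ i, 2 ≤ m i) (h3 : 3 ≤ m ⟨0, hk⟩) :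
    IsHeavy (prodPerm k m) (∑ i, m i - k - 3) ∧
    ∀ M : Set (Sym2 (∀ i : Fin k, Equiv.Perm (Fin (m i)))),
      IsMaximalMatching (prodPerm k m) M →
      ((∑ i, m i : ℕ) - (k : ℝ)) / (3 * (∑ i, m i : ℕ) - 3 * (k : ℝ) + 1) *
          (Fintype.card (∀ i : Fin k, Equiv.Perm (Fin (m i))) : ℝ) ≤ (M.ncard : ℝ) :=
  stmt17_general k m h2
end

section
/- If G = H □ K is a Cartesian product of graphs H and K, and there exist maximal matchings M_1, ..., M_k of H together with a coloring f : V(K) → [k] such that M_{f(u)} ∪ M_{f(v)} covers V(H) for every edge uv of K, then the set M = ⋃_{v ∈ V(K)} {((x,v),(y,v)) : xy ∈ M_{f(v)}} is a maximal matching of G. -/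
/-- if `M_1, …, M_k` are maximal matchings of `H` and `f : V(K) → [k]` is a
coloring such that `M_{f(u)} ∪ M_{f(v)}` covers `V(H)` for every edge `uv` of `K`, then
`M = ⋃_{v ∈ V(K)} {{(x,v),(y,v)} : xy ∈ M_{f(v)}}` is a maximal matching of `H □ K`. -/
theorem stmt19 {α β : Type*} [Fintype α] [Fintype β]
    (H : SimpleGraph α) (K : SimpleGraph β)
    (k : ℕ) (Ms : Fin k → Set (Sym2 α))
    (hMs : ∀ i, IsMaximalMatching H (Ms i))
    (f : β → Fin k)
    (hcov : ∀ u v, K.Adj u v → ∀ x : α, Covered (Ms (f u)) x ∨ Covered (Ms (f v)) x) :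
    IsMaximalMatching (H.boxProd K)
      {e | ∃ (v : β) (a b : α), e = s((a, v), (b, v)) ∧ s(a, b) ∈ Ms (f v)} := by
  set M : Set (Sym2 (α × β)) :=
    {e | ∃ (v : β) (a b : α), e = s((a, v), (b, v)) ∧ s(a, b) ∈ Ms (f v)} with hMdef
  have hlift : ∀ (v : β) (m : Sym2 α), m ∈ Ms (f v) →
      Sym2.map (fun x => (x, v)) m ∈ M := by
    intro v m
    induction m using Sym2.ind with
    | _ x y => intro hm; exact ⟨v, x, y, rfl, hm⟩
  have hmatch : IsMatching (H.boxProd K) M := by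
    constructor
    · rintro e ⟨v, a, b, rfl, hab⟩
      have hadj := (hMs (f v)).1.1 hab
      rw [SimpleGraph.mem_edgeSet] at hadj ⊢
      exact SimpleGraph.boxProd_adj.mpr (Or.inl ⟨hadj, rfl⟩)
    · rintro e ⟨v, a, b, rfl, hab⟩ e' ⟨v', a', b', rfl, hab'⟩ hne w hw hw'
      rw [Sym2.mem_iff] at hw hw'
      have hv : v = v' := by
        rcases hw with rfl | rfl <;> rcases hw' with h' | h' <;>
          exact congrArg Prod.snd h'
      subst hv
      have hw1 : w.1 ∈ s(a, b) := by
        rcases hw with rfl | rfl <;> simp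
      have hw1' : w.1 ∈ s(a', b') := by
        rcases hw' with h' | h' <;> rw [h'] <;> simp
      have hmne : s(a, b) ≠ s(a', b') := by
        intro h
        apply hne
        have : Sym2.map (fun x => (x, v)) s(a,b) = Sym2.map (fun x => (x, v)) s(a',b') :=
          congrArg _ h
        simpa [Sym2.map_pair_eq] using this
      exact (hMs (f v)).1.2 _ hab _ hab' hmne w.1 hw1 hw1'
  refine ⟨hmatch, fun M' hM' hsub => Set.Subset.antisymm (fun e he => ?_) hsub⟩
  revert he
  induction e using Sym2.ind with
  | _ p q =>
    obtain ⟨a, u⟩ := p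
    obtain ⟨b, v⟩ := q
    intro he
    have hadj := hM'.1 he
    rw [SimpleGraph.mem_edgeSet, SimpleGraph.boxProd_adj] at hadj
    rcases hadj with ⟨hH, h2⟩ | ⟨hK, h1⟩
    · simp only at hH h2
      subst h2
      by_contra hnot
      have hab : s(a, b) ∉ Ms (f u) := by
        intro h; exact hnot ⟨u, a, b, rfl, h⟩
      -- show insert s(a,b) (Ms (f u)) is a matching
      have hclaim : ∀ m ∈ Ms (f u), ∀ c, c ∈ s(a, b) → c ∉ m := by
        intro m hm c hc hcm
        have hLm : Sym2.map (fun x => (x, u)) m ∈ M' := hsub (hlift u m hm)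
        have hne : s((a, u), (b, u)) ≠ Sym2.map (fun x => (x, u)) m := by
          intro h
          apply hab
          have : s(a, b) = m := by
            have hinj : Function.Injective (fun x : α => (x, u)) := by
              intro x y hxy; exact congrArg Prod.fst hxy
            apply Sym2.map.injective hinj
            rw [← h, Sym2.map_pair_eq]
          rw [this]; exact hm
        have hcu : (c, u) ∈ s((a, u), (b, u)) := by
          rw [Sym2.mem_iff] at hc ⊢
          rcases hc with rfl | rfl
          · exact Or.inl rfl
          · exact Or.inr rfl
        have hcu' : (c, u) ∈ Sym2.map (fun x => (x, u)) m :=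
          Sym2.mem_map.mpr ⟨c, hcm, rfl⟩
        exact hM'.2 _ he _ hLm hne (c, u) hcu hcu'
      have hins : IsMatching H (insert s(a, b) (Ms (f u))) := by
        constructor
        · rintro e (rfl | hme)
          · exact hH
          · exact (hMs (f u)).1.1 hme
        · rintro e₁ (rfl | h1) e₂ (rfl | h2) hne c hc1 hc2
          · exact hne rfl
          · exact hclaim _ h2 c hc1 hc2
          · exact hclaim _ h1 c hc2 hc1
          · exact (hMs (f u)).1.2 _ h1 _ h2 hne c hc1 hc2
      have := (hMs (f u)).2 _ hins (Set.subset_insert _ _)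
      apply hab
      rw [← this]
      exact Set.mem_insert _ _
    · exfalso
      simp only at h1 hK
      subst h1
      have huv : u ≠ v := hK.ne
      rcases hcov u v hK a with ⟨m, hm, ham⟩ | ⟨m, hm, ham⟩
      · have hLm : Sym2.map (fun x => (x, u)) m ∈ M' := hsub (hlift u m hm)
        have hne : s((a, u), (a, v)) ≠ Sym2.map (fun x => (x, u)) m := by
          intro h
          have : (a, v) ∈ Sym2.map (fun x => (x, u)) m := by
            rw [← h]; simp
          obtain ⟨x, _, hx⟩ := Sym2.mem_map.mp this
          exact huv (congrArg Prod.snd hx)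
        have hcu : (a, u) ∈ Sym2.map (fun x => (x, u)) m :=
          Sym2.mem_map.mpr ⟨a, ham, rfl⟩
        exact hM'.2 _ he _ hLm hne (a, u) (by simp) hcu
      · have hLm : Sym2.map (fun x => (x, v)) m ∈ M' := hsub (hlift v m hm)
        have hne : s((a, u), (a, v)) ≠ Sym2.map (fun x => (x, v)) m := by
          intro h
          have : (a, u) ∈ Sym2.map (fun x => (x, v)) m := by
            rw [← h]; simp
          obtain ⟨x, _, hx⟩ := Sym2.mem_map.mp this
          exact huv (congrArg Prod.snd hx).symm
        have hcv : (a, v) ∈ Sym2.map (fun x => (x, v)) m :=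
          Sym2.mem_map.mpr ⟨a, ham, rfl⟩
        exact hM'.2 _ he _ hLm hne (a, v) (by simp) hcv
end
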